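/- arXiv:2407.00649 — 4 statements merged into one kernel-verified Lean document; each statement's English description precedes it below -/
import Mathlib

section
/- Let k_θ(x|z) be a kernel on ℝ^{d_x} × ℝ^{d_z}, parameterized by θ ∈ ℝ^{d_θ}, with ∫ k_θ(x|z) dx = 1 for all (θ, z), such that (θ, z) ↦ k_θ(x|z) is continuous for every x and sup_{θ,x,z} k_θ(x|z) ≤ B_k < ∞. Let p(·, y) be a nonnegative measurable function with 0 < p(y) := ∫ p(x, y) dx < ∞. Define q_{θ,r}(x) := ∫ k_θ(x|z) r(dz) and E(θ, r) := ∫ q_{θ,r}(x) log(q_{θ,r}(x)/p(x, y)) dx ∈ (−∞, +∞]. Then E is jointly lower semicontinuous: for every sequence (θ_n, r_n) with θ_n → θ in ℝ^{d_θ} and r_n → r weakly in the space of probability measures on ℝ^{d_z}, one has liminf_{n→∞} E(θ_n, r_n) ≥ E(θ, r). -/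
open MeasureTheory Filter Topology
open scoped ENNReal NNReal

/-- The integral of a real function, interpreted as an extended real number in `(-∞, +∞]`
when the negative part is integrable: positive part minus negative part, as `EReal`s. -/
noncomputable def eintegral {α : Type*} [MeasurableSpace α] (μ : Measure α) (f : α → ℝ) : EReal :=
  ((∫⁻ x, ENNReal.ofReal (f x) ∂μ : ℝ≥0∞) : EReal) -
    ((∫⁻ x, ENNReal.ofReal (-f x) ∂μ : ℝ≥0∞) : EReal)

/-- The semi-implicit density `q_{θ,r}(x) = ∫ k_θ(x|z) r(dz)`. -/
noncomputable def qdens {dθ dx dz : ℕ}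
    (k : (Fin dθ → ℝ) → (Fin dx → ℝ) → (Fin dz → ℝ) → ℝ)
    (θ : Fin dθ → ℝ) (r : ProbabilityMeasure (Fin dz → ℝ)) (x : Fin dx → ℝ) : ℝ :=
  ∫ z, k θ x z ∂(r : Measure (Fin dz → ℝ))

/-- The free energy `E(θ, r) = ∫ q_{θ,r} log(q_{θ,r}/p(·, y)) ∈ (-∞, +∞]`. -/
noncomputable def freeEnergy {dθ dx dz : ℕ}
    (k : (Fin dθ → ℝ) → (Fin dx → ℝ) → (Fin dz → ℝ) → ℝ)
    (p : (Fin dx → ℝ) → ℝ)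
    (θ : Fin dθ → ℝ) (r : ProbabilityMeasure (Fin dz → ℝ)) : EReal :=
  eintegral volume (fun x => qdens k θ r x * Real.log (qdens k θ r x / p x))

/-
The integrand `q log (q / p)` is bounded below by `-p`, which is integrable. For each `x`, the map
`(θ, r) ↦ q_{θ,r}(x)` is continuous, because `δ_θ ⊗ r` depends continuously on `(θ, r)` in the weak
topology and `(θ, z) ↦ k_θ(x|z)` is bounded and continuous; since `t ↦ t log (t / c)` is continuous,
the integrands converge pointwise. Fatou's lemma bounds the positive parts and dominated convergence
(with dominating function `p`) makes the negative parts converge.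
-/

namespace Real

theorem neg_le_mul_log_div {a b : ℝ} (ha : 0 ≤ a) (hb : 0 ≤ b) : -b ≤ a * log (a / b) := by
  rcases hb.eq_or_lt with rfl | hb
  · simp
  rcases ha.eq_or_lt with rfl | ha
  · simpa using hb.le
  have hlog := one_sub_inv_le_log_of_pos (div_pos ha hb)
  rw [inv_div] at hlog
  calc -b ≤ a - b := by linarith
    _ = a * (1 - b / a) := by field_simp
    _ ≤ a * log (a / b) := mul_le_mul_of_nonneg_left hlog ha.le

-- At `c = 0` the function vanishes identically, as `t / 0 = 0` and `log 0 = 0`.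
theorem continuous_mul_log_div_const (c : ℝ) : Continuous fun t => t * log (t / c) := by
  rcases eq_or_ne c 0 with rfl | hc
  · simpa using continuous_const
  refine ((continuous_mul_log.comp (continuous_id.div_const c)).const_mul c).congr fun t => ?_
  simp only [Function.comp_apply, id]
  field_simp

end Real

namespace EReal

theorem sub_le_liminf_sub_of_le_liminf_of_tendsto {ι : Type*} {l : Filter ι} [l.NeBot]
    {u v : ι → EReal} {a b : EReal} (hu : a ≤ liminf u l) (hv : Tendsto v l (𝓝 b)) :
    a - b ≤ liminf (fun i => u i - v i) l :=
  calc a - b ≤ liminf u l + liminf (-v) l := by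
        rw [liminf_neg, hv.limsup_eq, sub_eq_add_neg]
        exact add_le_add_left hu _
    _ ≤ liminf (fun i => u i - v i) l :=
        le_liminf_add.trans_eq (by simp only [sub_eq_add_neg]; rfl)

end EReal

section Fatou

variable {α ι : Type*} [MeasurableSpace α] {μ : Measure α} {l : Filter ι} [l.IsCountablyGenerated]
  {F : ι → α → ℝ} {f : α → ℝ}

theorem lintegral_ofReal_le_liminf_of_tendsto [l.NeBot] (hF : ∀ i, AEMeasurable (F i) μ)
    (hlim : ∀ᵐ x ∂μ, Tendsto (fun i => F i x) l (𝓝 (f x))) :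
    ∫⁻ x, ENNReal.ofReal (f x) ∂μ ≤ liminf (fun i => ∫⁻ x, ENNReal.ofReal (F i x) ∂μ) l := by
  calc ∫⁻ x, ENNReal.ofReal (f x) ∂μ = ∫⁻ x, liminf (fun i => ENNReal.ofReal (F i x)) l ∂μ := by
        refine lintegral_congr_ae ?_
        filter_upwards [hlim] with x hx
        exact ((ENNReal.continuous_ofReal.tendsto _).comp hx).liminf_eq.symm
    _ ≤ _ := lintegral_liminf_le' fun i => (hF i).ennreal_ofReal

theorem eintegral_le_liminf_of_tendsto [l.NeBot] {g : α → ℝ} (hF : ∀ i, AEMeasurable (F i) μ)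
    (hg : Integrable g μ) (hFg : ∀ i, ∀ᵐ x ∂μ, -g x ≤ F i x)
    (hlim : ∀ᵐ x ∂μ, Tendsto (fun i => F i x) l (𝓝 (f x))) :
    eintegral μ f ≤ liminf (fun i => eintegral μ (F i)) l := by
  have hneg : Tendsto (fun i => ∫⁻ x, ENNReal.ofReal (-F i x) ∂μ) l
      (𝓝 (∫⁻ x, ENNReal.ofReal (-f x) ∂μ)) := by
    refine tendsto_lintegral_filter_of_dominated_convergence' (fun x => ENNReal.ofReal (g x))
      (.of_forall fun i => (hF i).neg.ennreal_ofReal) (.of_forall fun i => ?_)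
      hg.lintegral_lt_top.ne ?_
    · filter_upwards [hFg i] with x hx
      exact ENNReal.ofReal_le_ofReal (by linarith)
    · filter_upwards [hlim] with x hx
      exact (ENNReal.continuous_ofReal.tendsto _).comp hx.neg
  refine EReal.sub_le_liminf_sub_of_le_liminf_of_tendsto ?_
    ((continuous_coe_ennreal_ereal.tendsto _).comp hneg)
  have hcoe : Monotone ((↑) : ℝ≥0∞ → EReal) := fun _ _ => EReal.coe_ennreal_le_coe_ennreal_iff.2
  exact (hcoe (lintegral_ofReal_le_liminf_of_tendsto hF hlim)).trans_eq
    (hcoe.map_liminf_of_continuousAt _ continuous_coe_ennreal_ereal.continuousAt)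

end Fatou

namespace MeasureTheory.ProbabilityMeasure

theorem continuous_integral_prodMk_left {Θ Z : Type*}
    [TopologicalSpace Θ] [MeasurableSpace Θ] [OpensMeasurableSpace Θ] [SecondCountableTopology Θ]
    [TopologicalSpace.PseudoMetrizableSpace Θ]
    [TopologicalSpace Z] [MeasurableSpace Z] [OpensMeasurableSpace Z] [SecondCountableTopology Z]
    [TopologicalSpace.PseudoMetrizableSpace Z] (g : BoundedContinuousFunction (Θ × Z) ℝ) :
    Continuous fun q : Θ × ProbabilityMeasure Z => ∫ z, g (q.1, z) ∂(q.2 : Measure Z) := by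
  have hprod : Continuous fun q : Θ × ProbabilityMeasure Z => (diracProba q.1).prod q.2 :=
    continuous_prod.comp (continuous_diracProba.prodMap continuous_id)
  refine ((continuous_integral_boundedContinuousFunction g).comp hprod).congr
    fun q => ?_
  change ∫ x, g x ∂((Measure.dirac q.1).prod (q.2 : Measure Z)) = _
  rw [Measure.dirac_prod, integral_map (by fun_prop) (by fun_prop)]

end MeasureTheory.ProbabilityMeasure

theorem continuous_qdens {dθ dx dz : ℕ} {Bk : ℝ}
    {k : (Fin dθ → ℝ) → (Fin dx → ℝ) → (Fin dz → ℝ) → ℝ} {x : Fin dx → ℝ}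
    (hk_cont : Continuous (fun p : (Fin dθ → ℝ) × (Fin dz → ℝ) => k p.1 x p.2))
    (hk_bdd : ∀ θ z, |k θ x z| ≤ Bk) :
    Continuous fun q : (Fin dθ → ℝ) × ProbabilityMeasure (Fin dz → ℝ) => qdens k q.1 q.2 x :=
  ProbabilityMeasure.continuous_integral_prodMk_left
    (.ofNormedAddCommGroup _ hk_cont Bk fun q => hk_bdd q.1 q.2)

theorem free_energy_lower_semicontinuous_general {dθ dx dz : ℕ} (Bk : ℝ)
    (k : (Fin dθ → ℝ) → (Fin dx → ℝ) → (Fin dz → ℝ) → ℝ)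
    (hk_meas : ∀ θ, Measurable (Function.uncurry (k θ)))
    (hk_cont : ∀ x, Continuous (fun p : (Fin dθ → ℝ) × (Fin dz → ℝ) => k p.1 x p.2))
    (hk_nonneg : ∀ θ x z, 0 ≤ k θ x z)
    (hk_bdd : ∀ θ x z, k θ x z ≤ Bk)
    (p : (Fin dx → ℝ) → ℝ) (hp_meas : Measurable p) (hp_nonneg : ∀ x, 0 ≤ p x)
    (hpy_pos : 0 < ∫ x, p x)
    (θseq : ℕ → (Fin dθ → ℝ)) (θ : Fin dθ → ℝ)
    (rseq : ℕ → ProbabilityMeasure (Fin dz → ℝ)) (r : ProbabilityMeasure (Fin dz → ℝ))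
    (hθ : Tendsto θseq atTop (𝓝 θ))
    (hr : Tendsto rseq atTop (𝓝 r)) :
    freeEnergy k p θ r ≤ liminf (fun n => freeEnergy k p (θseq n) (rseq n)) atTop := by
  have hp_int : Integrable p := .of_integral_ne_zero hpy_pos.ne'
  have hq_nonneg (θ' r' x) : 0 ≤ qdens k θ' r' x := integral_nonneg fun z => hk_nonneg θ' x z
  have hq_meas (θ' r') : Measurable (qdens k θ' r') :=
    (hk_meas θ').stronglyMeasurable.integral_prod_right'.measurable
  have hq_tendsto (x) : Tendsto (fun n => qdens k (θseq n) (rseq n) x) atTop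
      (𝓝 (qdens k θ r x)) :=
    ((continuous_qdens (hk_cont x) fun θ' z =>
      abs_le.2 ⟨by linarith [hk_nonneg θ' x z, hk_bdd θ' x z], hk_bdd θ' x z⟩).tendsto (θ, r)).comp
      (hθ.prodMk_nhds hr)
  exact eintegral_le_liminf_of_tendsto
    (fun _ => ((hq_meas _ _).mul ((hq_meas _ _).div hp_meas).log).aemeasurable) hp_int
    (fun _ => .of_forall fun x => Real.neg_le_mul_log_div (hq_nonneg _ _ x) (hp_nonneg x))
    (.of_forall fun x => ((Real.continuous_mul_log_div_const (p x)).tendsto _).comp (hq_tendsto x))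

/-- Joint lower semicontinuity of the free energy: if `θ_n → θ` in `ℝ^{d_θ}` and `r_n → r`
weakly in the space of probability measures, then `liminf E(θ_n, r_n) ≥ E(θ, r)`, provided
the kernel is bounded, normalized and continuous in `(θ, z)`, and the evidence is finite. -/
theorem free_energy_lower_semicontinuous {dθ dx dz : ℕ} (Bk : ℝ)
    (k : (Fin dθ → ℝ) → (Fin dx → ℝ) → (Fin dz → ℝ) → ℝ)
    (hk_meas : ∀ θ, Measurable (Function.uncurry (k θ)))
    (hk_cont : ∀ x, Continuous (fun p : (Fin dθ → ℝ) × (Fin dz → ℝ) => k p.1 x p.2))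
    (hk_nonneg : ∀ θ x z, 0 ≤ k θ x z)
    (hk_bdd : ∀ θ x z, k θ x z ≤ Bk)
    (hk_norm : ∀ θ z, ∫ x, k θ x z = 1)
    (p : (Fin dx → ℝ) → ℝ) (hp_meas : Measurable p) (hp_nonneg : ∀ x, 0 ≤ p x)
    (hpy_pos : 0 < ∫ x, p x)
    (θseq : ℕ → (Fin dθ → ℝ)) (θ : Fin dθ → ℝ)
    (rseq : ℕ → ProbabilityMeasure (Fin dz → ℝ)) (r : ProbabilityMeasure (Fin dz → ℝ))
    (hθ : Tendsto θseq atTop (𝓝 θ))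
    (hr : Tendsto rseq atTop (𝓝 r)) :
    freeEnergy k p θ r ≤ liminf (fun n => freeEnergy k p (θseq n) (rseq n)) atTop :=
  free_energy_lower_semicontinuous_general Bk k hk_meas hk_cont hk_nonneg hk_bdd p hp_meas hp_nonneg
    hpy_pos θseq θ rseq r hθ hr
end

section
/- Let d ≥ 1 and consider the kernel k_θ(x|z) := (2π)^{−d/2} exp(−‖x − θ‖²/2) on ℝ^d × ℝ (a Gaussian density in x with mean θ, not depending on z), and let p(x, y) := c · (2π)^{−d/2} exp(−‖x‖²/2) for a constant c > 0 (so the posterior p(·|y) is the standard Gaussian and p(y) = c). Then: (i) for every probability measure r on ℝ, q_{θ,r}(x) := ∫ k_θ(x|z) r(dz) equals the Gaussian density with mean θ and identity covariance, and E(θ, r) := ∫ q_{θ,r} log(q_{θ,r}/p(·, y)) = ½‖θ‖² − log c; (ii) for any fixed θ₀ and β := ½‖θ₀‖² − log c, the sublevel set {(θ, r) : E(θ, r) ≤ β} contains the sequence (θ₀, δ_n), n ∈ ℕ, where δ_n is the Dirac measure at n, and the family {δ_n : n ∈ ℕ} is not tight, so this sequence has no subsequence converging in ℝ^d × P(ℝ)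 (with the weak topology on P(ℝ)). In particular E is not coercive: it has a sublevel set that is not relatively compact. -/
/-!
The kernel does not depend on `z`, so the mixing measure `r` drops out: `q_{θ,r}` is the density
of `N(θ, I)` and `E(θ, r)` is `KL(N(θ, I) ‖ N(0, I)) - log c = ‖θ‖² / 2 - log c`. Hence every
`(θ₀, δ_n)` lies in one sublevel set, while the Diracs `δ_n` run off to infinity: no compact set
carries their mass, and by the portmanteau theorem no subsequence converges weakly. A compact set
containing the sublevel set would produce such a convergent subsequence.
-/

open MeasureTheory Filter Topology Real Bornology Module
open scoped RealInnerProductSpace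

section EscapingDiracs

variable {ι X : Type*} [MeasurableSpace X] {l : Filter ι} {x : ι → X}

lemma eventually_dirac_apply_eq_zero [Bornology X] (hx : Tendsto x l (cobounded X)) {s : Set X}
    (hs : IsBounded s) (hs_meas : MeasurableSet s) :
    ∀ᶠ i in l, Measure.dirac (x i) s = 0 := by
  filter_upwards [hx hs] with i (hi : x i ∈ sᶜ)
  rw [Measure.dirac_apply' _ hs_meas, Set.indicator_of_notMem hi]

/-- Dirac masses at points escaping to infinity have no weak limit: the limit would charge some
ball, and by the portmanteau theorem so would the Diracs, eventually. -/
lemma ProbabilityMeasure.not_tendsto_of_tendsto_cobounded [PseudoMetricSpace X]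
    [OpensMeasurableSpace X] [l.NeBot]
    {μ : ι → ProbabilityMeasure X} (hμ : ∀ i, (μ i : Measure X) = Measure.dirac (x i))
    (hx : Tendsto x l (cobounded X)) (L : ProbabilityMeasure X) : ¬ Tendsto μ l (𝓝 L) := by
  intro hL
  obtain ⟨i₀⟩ := nonempty_of_neBot l
  obtain ⟨m, hm⟩ : ∃ m : ℕ, (L : Measure X) (Metric.ball (x i₀) m) ≠ 0 := by
    by_contra! h
    simp [← measure_iUnion_null_iff, Metric.iUnion_ball_nat] at h
  have h_null : ∀ᶠ i in l, (μ i : Measure X) (Metric.ball (x i₀) m) = 0 := by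
    simpa only [hμ] using eventually_dirac_apply_eq_zero hx Metric.isBounded_ball
      measurableSet_ball
  have h_portmanteau := ProbabilityMeasure.le_liminf_measure_open_of_tendsto hL
    (Metric.isOpen_ball (x := x i₀) (ε := m))
  rw [liminf_congr h_null, liminf_const] at h_portmanteau
  exact hm (nonpos_iff_eq_zero.1 h_portmanteau)

end EscapingDiracs

section GaussianDensity

variable {V : Type*} [NormedAddCommGroup V] [InnerProductSpace ℝ V]

variable (V) in
noncomputable def gaussianDensity (θ x : V) : ℝ :=
  (2 * π) ^ (-(finrank ℝ V : ℝ) / 2) * exp (-‖x - θ‖ ^ 2 / 2)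

lemma gaussianDensity_zero (x : V) :
    gaussianDensity V 0 x = (2 * π) ^ (-(finrank ℝ V : ℝ) / 2) * exp (-(1 / 2) * ‖x‖ ^ 2) := by
  simp only [gaussianDensity, sub_zero]
  ring_nf

lemma log_gaussianDensity_div {c : ℝ} (hc : 0 < c) (θ x : V) :
    log (gaussianDensity V θ x / (c * gaussianDensity V 0 x)) =
      ⟪x, θ⟫ + (-(‖θ‖ ^ 2 / 2) - log c) := by
  have hC : 0 < (2 * π) ^ (-(finrank ℝ V : ℝ) / 2) := by positivity
  rw [gaussianDensity, gaussianDensity, log_div (by positivity) (by positivity),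
    log_mul hc.ne' (by positivity), log_mul hC.ne' (exp_ne_zero _),
    log_mul hC.ne' (exp_ne_zero _), log_exp, log_exp, norm_sub_sq_real, sub_zero]
  ring

variable [FiniteDimensional ℝ V] [MeasurableSpace V] [BorelSpace V]

lemma integrable_exp_neg_mul_sq_norm_add_inner {b : ℝ} (hb : 0 < b) (w : V) :
    Integrable (fun x : V ↦ exp (-b * ‖x‖ ^ 2 + ⟪w, x⟫)) := by
  refine (GaussianFourier.integrable_cexp_neg_mul_sq_norm_add (b := b) (by simpa using hb) 1
    w).norm.congr (.of_forall fun x ↦ ?_)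
  simp only [Complex.norm_exp]
  norm_cast
  simp

/-- `|s| ≤ exp s + exp (-s)` reduces this to two Gaussians with a linear tilt. -/
lemma integrable_exp_neg_mul_sq_norm_mul_inner {b : ℝ} (hb : 0 < b) (v : V) :
    Integrable (fun x : V ↦ exp (-b * ‖x‖ ^ 2) * ⟪x, v⟫) := by
  refine ((integrable_exp_neg_mul_sq_norm_add_inner hb v).add
    (integrable_exp_neg_mul_sq_norm_add_inner hb (-v))).mono' (by fun_prop)
    (.of_forall fun x ↦ ?_)
  have h_abs : |⟪x, v⟫| ≤ exp ⟪x, v⟫ + exp (-⟪x, v⟫) := by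
    rcases abs_cases ⟪x, v⟫ with ⟨h, -⟩ | ⟨h, -⟩ <;> rw [h] <;>
      linarith [add_one_le_exp ⟪x, v⟫, add_one_le_exp (-⟪x, v⟫), exp_pos ⟪x, v⟫,
        exp_pos (-⟪x, v⟫)]
  rw [Pi.add_apply, norm_mul, norm_of_nonneg (exp_pos _).le, norm_eq_abs, exp_add, exp_add,
    ← mul_add, inner_neg_left, real_inner_comm x]
  exact mul_le_mul_of_nonneg_left h_abs (exp_pos _).le

lemma integral_exp_neg_mul_sq_norm_mul_inner (b : ℝ) (v : V) :
    ∫ x : V, exp (-b * ‖x‖ ^ 2) * ⟪x, v⟫ = 0 := by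
  have h_odd := integral_neg_eq_self (fun x : V ↦ exp (-b * ‖x‖ ^ 2) * ⟪x, v⟫) volume
  simp only [norm_neg, inner_neg_left, mul_neg, integral_neg] at h_odd
  linarith

lemma integrable_gaussianDensity_zero : Integrable (gaussianDensity V 0) := by
  simpa [funext gaussianDensity_zero] using
    (integrable_exp_neg_mul_sq_norm_add_inner (by norm_num : (0 : ℝ) < 1 / 2) (0 : V)).const_mul
      ((2 * π) ^ (-(finrank ℝ V : ℝ) / 2))

lemma integrable_gaussianDensity_zero_mul_inner (v : V) :
    Integrable (fun x ↦ gaussianDensity V 0 x * ⟪x, v⟫) := by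
  simpa [gaussianDensity_zero, mul_assoc] using
    (integrable_exp_neg_mul_sq_norm_mul_inner (by norm_num : (0 : ℝ) < 1 / 2) v).const_mul
      ((2 * π) ^ (-(finrank ℝ V : ℝ) / 2))

lemma integral_gaussianDensity_zero : ∫ x, gaussianDensity V 0 x = 1 := by
  rw [funext gaussianDensity_zero, integral_const_mul,
    GaussianFourier.integral_rexp_neg_mul_sq_norm (by norm_num), div_div_eq_mul_div, div_one,
    mul_comm π, neg_div, rpow_neg (by positivity), inv_mul_cancel₀ (by positivity)]

lemma integral_gaussianDensity_zero_mul_inner (v : V) :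
    ∫ x, gaussianDensity V 0 x * ⟪x, v⟫ = 0 := by
  simp only [gaussianDensity_zero, mul_assoc, integral_const_mul,
    integral_exp_neg_mul_sq_norm_mul_inner, mul_zero]

theorem integral_gaussianDensity_mul_inner_add (θ v : V) (a : ℝ) :
    ∫ x, gaussianDensity V θ x * (⟪x, v⟫ + a) = ⟪θ, v⟫ + a := by
  calc ∫ x, gaussianDensity V θ x * (⟪x, v⟫ + a)
      = ∫ x, gaussianDensity V 0 x * (⟪x + θ, v⟫ + a) := by
        rw [← integral_add_right_eq_self _ θ]
        simp [gaussianDensity]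
    _ = ∫ x, gaussianDensity V 0 x * ⟪x, v⟫ + (⟪θ, v⟫ + a) * gaussianDensity V 0 x := by
        congr 1 with x
        rw [inner_add_left]
        ring
    _ = ⟪θ, v⟫ + a := by
        rw [integral_add (integrable_gaussianDensity_zero_mul_inner v)
            (integrable_gaussianDensity_zero.const_mul _), integral_const_mul,
          integral_gaussianDensity_zero_mul_inner, integral_gaussianDensity_zero, zero_add,
          mul_one]

theorem integral_gaussianDensity_mul_log_div {c : ℝ} (hc : 0 < c) (θ : V) :
    ∫ x, gaussianDensity V θ x * log (gaussianDensity V θ x / (c * gaussianDensity V 0 x)) =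
      ‖θ‖ ^ 2 / 2 - log c := by
  simp_rw [log_gaussianDensity_div hc, integral_gaussianDensity_mul_inner_add,
    real_inner_self_eq_norm_sq]
  ring

end GaussianDensity

theorem free_energy_not_coercive_general (d : ℕ) (c : ℝ) (hc : 0 < c)
    (k : EuclideanSpace ℝ (Fin d) → EuclideanSpace ℝ (Fin d) → ℝ)
    (hk : ∀ θ x, k θ x = (2 * Real.pi) ^ (-(d : ℝ) / 2) * Real.exp (-‖x - θ‖ ^ 2 / 2))
    (p : EuclideanSpace ℝ (Fin d) → ℝ)
    (hp : ∀ x, p x = c * ((2 * Real.pi) ^ (-(d : ℝ) / 2) * Real.exp (-‖x‖ ^ 2 / 2)))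
    (q : EuclideanSpace ℝ (Fin d) → ProbabilityMeasure ℝ → EuclideanSpace ℝ (Fin d) → ℝ)
    (hq : ∀ θ r x, q θ r x = ∫ _z, k θ x ∂(r : Measure ℝ))
    (E : EuclideanSpace ℝ (Fin d) → ProbabilityMeasure ℝ → ℝ)
    (hE : ∀ θ r, E θ r = ∫ x, q θ r x * Real.log (q θ r x / p x))
    (θ₀ : EuclideanSpace ℝ (Fin d)) (β : ℝ) (hβ : β = ‖θ₀‖ ^ 2 / 2 - Real.log c)
    (δ : ℕ → ProbabilityMeasure ℝ)
    (hδ : ∀ n : ℕ, (δ n : Measure ℝ) = Measure.dirac (n : ℝ)) :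
    (∀ θ r x, q θ r x = (2 * Real.pi) ^ (-(d : ℝ) / 2) * Real.exp (-‖x - θ‖ ^ 2 / 2)) ∧
    (∀ θ r, E θ r = ‖θ‖ ^ 2 / 2 - Real.log c) ∧
    (∀ n : ℕ, E θ₀ (δ n) ≤ β) ∧
    ¬ (∀ ε : ℝ, 0 < ε → ∃ K : Set ℝ, IsCompact K ∧
        ∀ n : ℕ, 1 - ε ≤ ((δ n : Measure ℝ) K).toReal) ∧
    ¬ (∃ φ : ℕ → ℕ, StrictMono φ ∧
        ∃ L : EuclideanSpace ℝ (Fin d) × ProbabilityMeasure ℝ,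
          Tendsto (fun n => (θ₀, δ (φ n))) atTop (𝓝 L)) ∧
    ¬ (∃ K : Set (EuclideanSpace ℝ (Fin d) × ProbabilityMeasure ℝ), IsCompact K ∧
        {m : EuclideanSpace ℝ (Fin d) × ProbabilityMeasure ℝ | E m.1 m.2 ≤ β} ⊆ K) := by
  have h_mixture : ∀ θ r x,
      q θ r x = (2 * Real.pi) ^ (-(d : ℝ) / 2) * Real.exp (-‖x - θ‖ ^ 2 / 2) := by
    simp [hq, hk]
  have h_free_energy : ∀ θ r, E θ r = ‖θ‖ ^ 2 / 2 - Real.log c := by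
    have hq' : ∀ θ r, q θ r = gaussianDensity _ θ := fun θ r ↦ by
      ext x
      simp [h_mixture, gaussianDensity]
    have hp' : p = fun x ↦ c * gaussianDensity _ 0 x := by
      ext x
      simp [hp, gaussianDensity]
    intro θ r
    rw [hE, hq', hp', integral_gaussianDensity_mul_log_div hc]
  have h_sublevel : ∀ n : ℕ, E θ₀ (δ n) ≤ β := fun n ↦ (h_free_energy θ₀ (δ n)).trans_le hβ.ge
  have h_escape : Tendsto (fun n : ℕ ↦ (n : ℝ)) atTop (cobounded ℝ) :=
    tendsto_natCast_atTop_cobounded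
  have h_no_subseq : ¬ (∃ φ : ℕ → ℕ, StrictMono φ ∧
      ∃ L : EuclideanSpace ℝ (Fin d) × ProbabilityMeasure ℝ,
        Tendsto (fun n ↦ (θ₀, δ (φ n))) atTop (𝓝 L)) := by
    rintro ⟨φ, hφ, L, hL⟩
    exact ProbabilityMeasure.not_tendsto_of_tendsto_cobounded (fun n ↦ hδ (φ n))
      (h_escape.comp hφ.tendsto_atTop) L.2 ((continuous_snd.tendsto L).comp hL)
  refine ⟨h_mixture, h_free_energy, h_sublevel, fun h_tight ↦ ?_, h_no_subseq, ?_⟩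
  · obtain ⟨K, hK, h_mass⟩ := h_tight (1 / 2) one_half_pos
    obtain ⟨n, hn⟩ :=
      (eventually_dirac_apply_eq_zero h_escape hK.isBounded hK.measurableSet).exists
    have h_mass_n := h_mass n
    rw [hδ, hn] at h_mass_n
    norm_num at h_mass_n
  · rintro ⟨K, hK, h_sub⟩
    obtain ⟨L, -, φ, hφ, hL⟩ := hK.tendsto_subseq (x := fun n ↦ (θ₀, δ n))
      fun n ↦ h_sub (h_sublevel n)
    exact h_no_subseq ⟨φ, hφ, L, hL⟩

/-- Non-coercivity of the (unregularized) free energy. For the `z`-independent Gaussian kernel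
`k_θ(x|z) = N(x; θ, I)` and target `p(x, y) = c · N(x; 0, I)`:
(i) `q_{θ,r} = N(θ, I)` for every mixing measure `r`, and `E(θ, r) = ½‖θ‖² − log c`;
(ii) the sublevel set `{E ≤ β}`, `β = ½‖θ₀‖² − log c`, contains `(θ₀, δ_n)` for all `n`, the family
of Diracs `{δ_n}` is not tight, the sequence `(θ₀, δ_n)` has no convergent subsequence in
`ℝ^d × P(ℝ)`, and the sublevel set is not contained in any compact set (non-coercivity). -/
theorem free_energy_not_coercive (d : ℕ) (hd : 1 ≤ d) (c : ℝ) (hc : 0 < c)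
    (k : EuclideanSpace ℝ (Fin d) → EuclideanSpace ℝ (Fin d) → ℝ)
    (hk : ∀ θ x, k θ x = (2 * Real.pi) ^ (-(d : ℝ) / 2) * Real.exp (-‖x - θ‖ ^ 2 / 2))
    (p : EuclideanSpace ℝ (Fin d) → ℝ)
    (hp : ∀ x, p x = c * ((2 * Real.pi) ^ (-(d : ℝ) / 2) * Real.exp (-‖x‖ ^ 2 / 2)))
    (q : EuclideanSpace ℝ (Fin d) → ProbabilityMeasure ℝ → EuclideanSpace ℝ (Fin d) → ℝ)
    (hq : ∀ θ r x, q θ r x = ∫ _z, k θ x ∂(r : Measure ℝ))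
    (E : EuclideanSpace ℝ (Fin d) → ProbabilityMeasure ℝ → ℝ)
    (hE : ∀ θ r, E θ r = ∫ x, q θ r x * Real.log (q θ r x / p x))
    (θ₀ : EuclideanSpace ℝ (Fin d)) (β : ℝ) (hβ : β = ‖θ₀‖ ^ 2 / 2 - Real.log c)
    (δ : ℕ → ProbabilityMeasure ℝ)
    (hδ : ∀ n : ℕ, (δ n : Measure ℝ) = Measure.dirac (n : ℝ)) :
    (∀ θ r x, q θ r x = (2 * Real.pi) ^ (-(d : ℝ) / 2) * Real.exp (-‖x - θ‖ ^ 2 / 2)) ∧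
    (∀ θ r, E θ r = ‖θ‖ ^ 2 / 2 - Real.log c) ∧
    (∀ n : ℕ, E θ₀ (δ n) ≤ β) ∧
    ¬ (∀ ε : ℝ, 0 < ε → ∃ K : Set ℝ, IsCompact K ∧
        ∀ n : ℕ, 1 - ε ≤ ((δ n : Measure ℝ) K).toReal) ∧
    ¬ (∃ φ : ℕ → ℕ, StrictMono φ ∧
        ∃ L : EuclideanSpace ℝ (Fin d) × ProbabilityMeasure ℝ,
          Tendsto (fun n => (θ₀, δ (φ n))) atTop (𝓝 L)) ∧
    ¬ (∃ K : Set (EuclideanSpace ℝ (Fin d) × ProbabilityMeasure ℝ), IsCompact K ∧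
        {m : EuclideanSpace ℝ (Fin d) × ProbabilityMeasure ℝ | E m.1 m.2 ≤ β} ⊆ K) :=
  free_energy_not_coercive_general d c hc k hk p hp q hq E hE θ₀ β hβ δ hδ
end

section
/- Let q be a probability density on ℝ^{d_x} and p(·, y) > 0 measurable, and for γ ≥ 0 define E^γ := ∫ q(x) log((q(x) + γ)/p(x, y)) dx ∈ (−∞, +∞]. Suppose that for some γ₀ > 0 one has ∫ q(x) log(1 + γ₀/q(x)) dx < ∞ (the integral taken over {q > 0}). Then E^γ ≥ E⁰ for all γ > 0, γ ↦ E^γ − E⁰ = ∫ q log(1 + γ/q) is nondecreasing in γ, and lim_{γ→0⁺} E^γ = E⁰. In particular, for the semi-implicit density q = q_{θ,r}, the regularized free energy E^γ_λ(θ, r) := E^γ(θ, r) + R_λ(θ, r) converges pointwise to E_λ(θ, r) := E(θ, r) + R_λ(θ, r) as γ → 0⁺, which provides a recovery sequence (the constant sequence) for Γ-convergence. -/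
open MeasureTheory Filter Topology
open scoped ENNReal NNReal

namespace Real

lemma mul_log_one_add_div_nonneg {q γ : ℝ} (hq : 0 ≤ q) (hγ : 0 ≤ γ) :
    0 ≤ q * log (1 + γ / q) :=
  mul_nonneg hq (log_nonneg (le_add_of_nonneg_right (div_nonneg hγ hq)))

lemma monotoneOn_mul_log_one_add_div {q : ℝ} (hq : 0 ≤ q) :
    MonotoneOn (fun γ => q * log (1 + γ / q)) (Set.Ici 0) := by
  intro γ₁ (hγ₁ : 0 ≤ γ₁) γ₂ _ h
  rcases hq.eq_or_lt with rfl | hq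
  · simp
  have : 0 < 1 + γ₁ / q := by positivity
  dsimp only
  gcongr

lemma mul_log_one_add_nat_mul_div_le {q γ : ℝ} (hq : 0 ≤ q) (hγ : 0 ≤ γ) (n : ℕ) :
    q * log (1 + n * γ / q) ≤ n * (q * log (1 + γ / q)) := by
  have hpos : 0 < 1 + n * γ / q := by positivity
  calc q * log (1 + n * γ / q) ≤ q * log ((1 + γ / q) ^ n) := by
        gcongr
        rw [mul_div_assoc]
        exact one_add_mul_le_pow (by linarith [div_nonneg hγ hq]) n
    _ = n * (q * log (1 + γ / q)) := by rw [log_pow]; ring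

lemma mul_log_add_div_eq {q γ p : ℝ} (hq : 0 ≤ q) (hγ : 0 ≤ γ) (hp : p ≠ 0) :
    q * log ((q + γ) / p) = q * log (q / p) + q * log (1 + γ / q) := by
  rcases hq.eq_or_lt with rfl | hq
  · simp
  have hfactor : (q + γ) / p = q / p * (1 + γ / q) := by field_simp
  rw [hfactor, log_mul (by positivity) (by positivity), mul_add]

end Real

lemma ENNReal.ofReal_add_add_ofReal_neg {a c : ℝ} (hc : 0 ≤ c) :
    ENNReal.ofReal (a + c) + ENNReal.ofReal (-a) =
      ENNReal.ofReal a + ENNReal.ofReal (-(a + c)) + ENNReal.ofReal c := by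
  rcases le_total 0 a with ha | ha <;> rcases le_total 0 (a + c) with hac | hac <;>
    simp only [ENNReal.ofReal_of_nonpos, ha, hac, neg_nonpos, zero_add, add_zero]
  · exact ENNReal.ofReal_add ha hc
  · simp [show a = 0 by linarith, show c = 0 by linarith]
  · rw [← ENNReal.ofReal_add hac (neg_nonneg.2 ha)]; ring_nf
  · rw [← ENNReal.ofReal_add (neg_nonneg.2 hac) hc]; ring_nf

lemma EReal.coe_ennreal_sub_eq_of_add_eq {P P' N N' d : ℝ≥0∞} (hd : d ≠ ∞) (hN' : N' ≤ N)
    (hN : N ≤ N' + d) (h : P' + N = P + N' + d) : (P' : EReal) - N' = P - N + d := by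
  rcases eq_or_ne N ∞ with rfl | hN_top
  · obtain rfl : N' = ∞ := by
      by_contra hN'_top
      exact ENNReal.add_ne_top.2 ⟨hN'_top, hd⟩ (top_le_iff.1 hN)
    simp
  lift N to ℝ≥0 using hN_top
  lift N' to ℝ≥0 using ne_top_of_le_ne_top ENNReal.coe_ne_top hN'
  lift d to ℝ≥0 using hd
  rcases eq_or_ne P ∞ with rfl | hP_top
  · obtain rfl : P' = ∞ := by simpa using h
    simp [EReal.coe_nnreal_eq_coe_real]
  lift P to ℝ≥0 using hP_top
  lift P' to ℝ≥0 using by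
    rintro rfl
    norm_cast at h
  have h' : (P' : ℝ) + N = P + N' + d := by exact_mod_cast h
  simp only [EReal.coe_nnreal_eq_coe_real, ← EReal.coe_sub, ← EReal.coe_add]
  exact congrArg _ (by linarith)

lemma eintegral_add_of_nonneg {α : Type*} [MeasurableSpace α] {μ : Measure α} {f g : α → ℝ}
    (hf : AEMeasurable f μ) (hg : AEMeasurable g μ) (hg_nonneg : ∀ x, 0 ≤ g x)
    (hg_fin : ∫⁻ x, ENNReal.ofReal (g x) ∂μ ≠ ∞) :
    eintegral μ (fun x => f x + g x) = eintegral μ f + ∫⁻ x, ENNReal.ofReal (g x) ∂μ := by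
  refine EReal.coe_ennreal_sub_eq_of_add_eq hg_fin
    (lintegral_mono fun x => ENNReal.ofReal_le_ofReal (by linarith [hg_nonneg x])) ?_ ?_
  · rw [← lintegral_add_right' _ hg.ennreal_ofReal]
    exact lintegral_mono fun x => (congrArg ENNReal.ofReal (by ring)).le.trans ENNReal.ofReal_add_le
  · calc _ = ∫⁻ x, ENNReal.ofReal (f x + g x) + ENNReal.ofReal (-f x) ∂μ :=
          (lintegral_add_left' (by fun_prop) _).symm
      _ = ∫⁻ x, ENNReal.ofReal (f x) + ENNReal.ofReal (-(f x + g x)) + ENNReal.ofReal (g x) ∂μ :=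
          lintegral_congr fun x => ENNReal.ofReal_add_add_ofReal_neg (hg_nonneg x)
      _ = _ := by rw [lintegral_add_left' (by fun_prop), lintegral_add_left' (by fun_prop)]

lemma EReal.tendsto_add_coe_ennreal {ι : Type*} {l : Filter ι} {d : ι → ℝ≥0∞}
    (hd : Tendsto d l (𝓝 0)) (a : EReal) : Tendsto (fun i => a + (d i : EReal)) l (𝓝 a) := by
  have hcont : ContinuousAt (fun p : EReal × EReal => p.1 + p.2) (a, 0) :=
    EReal.continuousAt_add (Or.inr (by simp)) (Or.inr (by simp))
  have := hcont.tendsto.comp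
    (tendsto_const_nhds.prodMk_nhds ((continuous_coe_ennreal_ereal.tendsto 0).comp hd))
  simpa [Function.comp_def] using this

/-- `E^γ - E⁰`. Where `q = 0` the integrand is `0 * log 1 = 0`, since `γ / 0 = 0` in Lean. -/
noncomputable def smoothingGap {α : Type*} [MeasurableSpace α] (μ : Measure α) (q : α → ℝ)
    (γ : ℝ) : ℝ≥0∞ :=
  ∫⁻ x, ENNReal.ofReal (q x * Real.log (1 + γ / q x)) ∂μ

section smoothingGap

variable {α : Type*} [MeasurableSpace α] {μ : Measure α} {q : α → ℝ}

lemma smoothingGap_mono (hq : ∀ x, 0 ≤ q x) : MonotoneOn (smoothingGap μ q) (Set.Ici 0) :=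
  fun _ h₁ _ h₂ h₁₂ => lintegral_mono fun x =>
    ENNReal.ofReal_le_ofReal (Real.monotoneOn_mul_log_one_add_div (hq x) h₁ h₂ h₁₂)

lemma smoothingGap_ne_top (hq : ∀ x, 0 ≤ q x) {γ₀ γ : ℝ} (hγ₀ : 0 < γ₀)
    (h₀ : smoothingGap μ q γ₀ ≠ ∞) (hγ : 0 ≤ γ) : smoothingGap μ q γ ≠ ∞ := by
  obtain ⟨n, hn⟩ := exists_nat_ge (γ / γ₀)
  have hγn : γ ≤ n * γ₀ := (div_le_iff₀ hγ₀).1 hn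
  have hscale : smoothingGap μ q (n * γ₀) ≤ n * smoothingGap μ q γ₀ := by
    rw [smoothingGap, smoothingGap, ← lintegral_const_mul' _ _ (ENNReal.natCast_ne_top n)]
    refine lintegral_mono fun x => ?_
    rw [← ENNReal.ofReal_natCast, ← ENNReal.ofReal_mul n.cast_nonneg]
    exact ENNReal.ofReal_le_ofReal (Real.mul_log_one_add_nat_mul_div_le (hq x) hγ₀.le n)
  refine ne_top_of_le_ne_top (ENNReal.mul_ne_top (ENNReal.natCast_ne_top n) h₀) ?_
  exact (smoothingGap_mono hq hγ (by positivity : (0 : ℝ) ≤ n * γ₀) hγn).trans hscale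

lemma tendsto_smoothingGap_nhdsGT_zero (hq_meas : AEMeasurable q μ) (hq : ∀ x, 0 ≤ q x)
    {γ₀ : ℝ} (hγ₀ : 0 < γ₀) (h₀ : smoothingGap μ q γ₀ ≠ ∞) :
    Tendsto (smoothingGap μ q) (𝓝[>] 0) (𝓝 0) := by
  have hlim : ∀ x, Tendsto (fun γ => ENNReal.ofReal (q x * Real.log (1 + γ / q x))) (𝓝[>] 0)
      (𝓝 0) := by
    intro x
    have hcont : ContinuousAt (fun γ => ENNReal.ofReal (q x * Real.log (1 + γ / q x))) 0 := by
      have : (1 : ℝ) + 0 / q x ≠ 0 := by simp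
      exact ENNReal.continuous_ofReal.continuousAt.comp (by fun_prop (disch := assumption))
    simpa using hcont.tendsto.mono_left nhdsWithin_le_nhds
  show Tendsto (fun γ => smoothingGap μ q γ) _ _
  simpa [smoothingGap] using tendsto_lintegral_filter_of_dominated_convergence'
    (fun x => ENNReal.ofReal (q x * Real.log (1 + γ₀ / q x)))
    (Eventually.of_forall fun γ => by fun_prop)
    (eventually_of_mem (Ioc_mem_nhdsGT hγ₀) fun γ hγ => Eventually.of_forall fun x =>
      ENNReal.ofReal_le_ofReal (Real.monotoneOn_mul_log_one_add_div (hq x) hγ.1.le hγ₀.le hγ.2))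
    h₀ (Eventually.of_forall hlim)

end smoothingGap

theorem gamma_energy_pointwise_convergence_general {dx : ℕ}
    (q : (Fin dx → ℝ) → ℝ) (hq_meas : Measurable q)
    (hq_nonneg : ∀ x, 0 ≤ q x)
    (p : (Fin dx → ℝ) → ℝ) (hp_meas : Measurable p) (hp_pos : ∀ x, 0 < p x)
    (Eg : ℝ → EReal)
    (hEg : ∀ γ, Eg γ = eintegral volume (fun x => q x * Real.log ((q x + γ) / p x)))
    (γ₀ : ℝ) (hγ₀ : 0 < γ₀)
    (hfin : ∫⁻ x in {x | 0 < q x}, ENNReal.ofReal (q x * Real.log (1 + γ₀ / q x)) < ⊤)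
    (D : ℝ → ℝ≥0∞)
    (hD : ∀ γ, D γ = ∫⁻ x in {x | 0 < q x}, ENNReal.ofReal (q x * Real.log (1 + γ / q x)))
    (R : EReal) :
    (∀ γ : ℝ, 0 < γ → Eg 0 ≤ Eg γ) ∧
    (∀ γ : ℝ, 0 < γ → Eg γ = Eg 0 + ((D γ : ℝ≥0∞) : EReal)) ∧
    (∀ γ₁ γ₂ : ℝ, 0 < γ₁ → γ₁ ≤ γ₂ → D γ₁ ≤ D γ₂) ∧
    Tendsto Eg (𝓝[>] (0 : ℝ)) (𝓝 (Eg 0)) ∧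
    Tendsto (fun γ => Eg γ + R) (𝓝[>] (0 : ℝ)) (𝓝 (Eg 0 + R)) := by
  have hD_eq : D = smoothingGap volume q := funext fun γ =>
    (hD γ).trans <| setLIntegral_eq_of_support_subset fun x hx =>
      (hq_nonneg x).lt_of_ne fun hq0 => hx (by simp [← hq0])
  rw [← hD γ₀, hD_eq] at hfin
  subst hD_eq
  have hsplit : ∀ γ, 0 < γ → Eg γ = Eg 0 + smoothingGap volume q γ := by
    intro γ hγ
    simp only [hEg, add_zero, Real.mul_log_add_div_eq (hq_nonneg _) hγ.le (hp_pos _).ne']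
    exact eintegral_add_of_nonneg (by fun_prop) (by fun_prop)
      (fun x => Real.mul_log_one_add_div_nonneg (hq_nonneg x) hγ.le)
      (smoothingGap_ne_top hq_nonneg hγ₀ hfin.ne hγ.le)
  have hlim := tendsto_smoothingGap_nhdsGT_zero hq_meas.aemeasurable hq_nonneg hγ₀ hfin.ne
  have hsplit_ev : ∀ᶠ γ in 𝓝[>] 0, Eg γ = Eg 0 + smoothingGap volume q γ :=
    eventually_mem_nhdsWithin.mono hsplit
  refine ⟨fun γ hγ => hsplit γ hγ ▸ le_add_of_nonneg_right (EReal.coe_ennreal_nonneg _), hsplit,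
    fun γ₁ γ₂ h₁ h₁₂ => smoothingGap_mono hq_nonneg h₁.le (h₁.le.trans h₁₂) h₁₂,
    (EReal.tendsto_add_coe_ennreal hlim _).congr' (hsplit_ev.mono fun _ h => h.symm), ?_⟩
  refine (EReal.tendsto_add_coe_ennreal hlim (Eg 0 + R)).congr' (hsplit_ev.mono fun γ h => ?_)
  show _ = Eg γ + R
  rw [h, add_right_comm]

/-- Monotone pointwise convergence `E^γ → E⁰` as `γ → 0⁺`: for a probability density `q` and
positive `p(·, y)`, with `E^γ = ∫ q log((q + γ)/p(·, y))`, one has `E^γ ≥ E⁰`,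
`E^γ = E⁰ + ∫_{q>0} q log(1 + γ/q)` with the correction nondecreasing in `γ`, and
`E^γ → E⁰` as `γ → 0⁺`; consequently `E^γ + R → E⁰ + R` for any regularizer value `R`,
providing a (constant) recovery sequence for Γ-convergence. -/
theorem gamma_energy_pointwise_convergence {dx : ℕ}
    (q : (Fin dx → ℝ) → ℝ) (hq_meas : Measurable q)
    (hq_nonneg : ∀ x, 0 ≤ q x) (hq_norm : ∫ x, q x = 1)
    (p : (Fin dx → ℝ) → ℝ) (hp_meas : Measurable p) (hp_pos : ∀ x, 0 < p x)
    (Eg : ℝ → EReal)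
    (hEg : ∀ γ, Eg γ = eintegral volume (fun x => q x * Real.log ((q x + γ) / p x)))
    (γ₀ : ℝ) (hγ₀ : 0 < γ₀)
    (hfin : ∫⁻ x in {x | 0 < q x}, ENNReal.ofReal (q x * Real.log (1 + γ₀ / q x)) < ⊤)
    (D : ℝ → ℝ≥0∞)
    (hD : ∀ γ, D γ = ∫⁻ x in {x | 0 < q x}, ENNReal.ofReal (q x * Real.log (1 + γ / q x)))
    (R : EReal) (hR : R ≠ ⊥) :
    (∀ γ : ℝ, 0 < γ → Eg 0 ≤ Eg γ) ∧
    (∀ γ : ℝ, 0 < γ → Eg γ = Eg 0 + ((D γ : ℝ≥0∞) : EReal)) ∧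
    (∀ γ₁ γ₂ : ℝ, 0 < γ₁ → γ₁ ≤ γ₂ → D γ₁ ≤ D γ₂) ∧
    Tendsto Eg (𝓝[>] (0 : ℝ)) (𝓝 (Eg 0)) ∧
    Tendsto (fun γ => Eg γ + R) (𝓝[>] (0 : ℝ)) (𝓝 (Eg 0 + R)) :=
  gamma_energy_pointwise_convergence_general q hq_meas hq_nonneg p hp_meas hp_pos Eg hEg γ₀ hγ₀ hfin
    D hD R
end

section
/- Let μ : ℝ^{d_θ} × ℝ^{d_z} → ℝ^{d_x}, written μ_θ(z), be differentiable with ‖∇_{(θ,z)} μ_θ(z)‖_F ≤ B_μ for all (θ, z), and suppose there is K_μ > 0 such that ‖μ_θ(z) − μ_{θ'}(z')‖ ≤ K_μ ‖(θ, z) − (θ', z')‖ and ‖∇_{(θ,z)} μ_θ(z) − ∇_{(θ,z)} μ_{θ'}(z')‖_F ≤ K_μ ‖(θ, z) − (θ', z')‖ for all (θ, z), (θ', z'). Let Σ ∈ ℝ^{d_x × d_x} be symmetric positive definite and define the Gaussian kernel k_θ(x|z) := (2π)^{−d_x/2} det(Σ)^{−1/2} exp(−½ (x − μ_θ(z))ᵀ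 Σ^{−1} (x − μ_θ(z))). Then k_θ satisfies the kernel regularity assumption: (i) there exists B > 0 with k_θ(x|z) + ‖∇_{(θ,x,z)} k_θ(x|z)‖ ≤ B for all (θ, x, z); and (ii) there exists K > 0 with ‖∇_x k_θ(x|z) − ∇_x k_{θ'}(x'|z')‖ ≤ K ‖(θ, x, z) − (θ', x', z')‖ for all (θ, x, z), (θ', x', z'). -/
/-!
Write `k = c₀ · g ∘ m` with `g v = exp (-½ ⟪v, Σ⁻¹ v⟫)` and `m (θ, x, z) = x - μ_θ(z)`.
Positive definiteness of `Σ⁻¹` on the finite-dimensional space gives `⟪v, Σ⁻¹ v⟫ ≥ c ‖v‖²`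
for some `c > 0`, so the Gaussian factor in `∇g v = -g v • Σ⁻¹ v` and in its derivative absorbs
the polynomial factors `‖v‖` and `‖v‖²`: both `g` and `∇g` are globally Lipschitz. The bound on
`∇μ` makes `m` Lipschitz by the mean value inequality, so `k = c₀ · g ∘ m` is Lipschitz (which
bounds its derivative), and `∇ₓ k = c₀ · ∇g ∘ m` is Lipschitz in `(θ, x, z)`.
-/

open MeasureTheory Filter Topology Matrix

abbrev Esp (n : ℕ) : Type := EuclideanSpace ℝ (Fin n)

open scoped RealInnerProductSpace NNReal

lemma sq_mul_exp_neg_mul_sq_div_two_le {c : ℝ} (hc : 0 < c) (t : ℝ) :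
    t ^ 2 * Real.exp (-(c * t ^ 2 / 2)) ≤ 2 / c := by
  have key := Real.mul_exp_neg_le_exp_neg_one (c * t ^ 2 / 2)
  have hexp : Real.exp (-1) ≤ 1 := Real.exp_le_one_iff.2 (by norm_num)
  calc t ^ 2 * Real.exp (-(c * t ^ 2 / 2))
      = 2 / c * (c * t ^ 2 / 2 * Real.exp (-(c * t ^ 2 / 2))) := by field_simp
    _ ≤ 2 / c * 1 := by gcongr; exact key.trans hexp
    _ = 2 / c := mul_one _

lemma ContinuousLinearMap.exists_pos_mul_sq_norm_le_inner_self {E : Type*}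
    [NormedAddCommGroup E] [InnerProductSpace ℝ E] [FiniteDimensional ℝ E] (L : E →L[ℝ] E)
    (hpos : ∀ v, v ≠ 0 → 0 < ⟪v, L v⟫) :
    ∃ c : ℝ≥0, 0 < c ∧ ∀ v, c * ‖v‖ ^ 2 ≤ ⟪v, L v⟫ := by
  cases subsingleton_or_nontrivial E with
  | inl _ => exact ⟨1, one_pos, fun v => by simp [Subsingleton.elim v 0]⟩
  | inr _ =>
    obtain ⟨u, hu, hmin⟩ := (isCompact_sphere (0 : E) 1).exists_isMinOn
      (NormedSpace.sphere_nonempty.2 zero_le_one)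
      (continuous_id.inner (𝕜 := ℝ) L.continuous).continuousOn
    have hu0 : u ≠ 0 := ne_zero_of_mem_unit_sphere ⟨u, hu⟩
    refine ⟨⟨_, (hpos u hu0).le⟩, hpos u hu0, fun v => ?_⟩
    rcases eq_or_ne v 0 with rfl | hv
    · simp
    have hv' : 0 < ‖v‖ := norm_pos_iff.2 hv
    have hmem : ‖v‖⁻¹ • v ∈ Metric.sphere (0 : E) 1 := by
      simp [norm_smul, hv'.ne']
    have h : ⟪u, L u⟫ ≤ ⟪‖v‖⁻¹ • v, L (‖v‖⁻¹ • v)⟫ := hmin hmem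
    rw [map_smul, real_inner_smul_left, real_inner_smul_right] at h
    calc ⟪u, L u⟫ * ‖v‖ ^ 2 ≤ ‖v‖⁻¹ * (‖v‖⁻¹ * ⟪v, L v⟫) * ‖v‖ ^ 2 :=
          mul_le_mul_of_nonneg_right h (by positivity)
      _ = ⟪v, L v⟫ := by field_simp

lemma Matrix.PosDef.exists_pos_mul_sq_norm_le_inner_toEuclideanCLM {n : Type*} [Fintype n]
    [DecidableEq n] {A : Matrix n n ℝ} (hA : A.PosDef) :
    ∃ c : ℝ≥0, 0 < c ∧ ∀ v, c * ‖v‖ ^ 2 ≤ ⟪v, toEuclideanCLM (𝕜 := ℝ) A v⟫ := by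
  refine ContinuousLinearMap.exists_pos_mul_sq_norm_le_inner_self
    (toEuclideanCLM (𝕜 := ℝ) A : EuclideanSpace ℝ n →L[ℝ] EuclideanSpace ℝ n) fun v hv => ?_
  rw [inner_toEuclideanCLM]
  simpa using hA.dotProduct_mulVec_pos (x := WithLp.ofLp v) (by simpa using hv)

section GaussProfile

variable {E : Type*} [NormedAddCommGroup E] [InnerProductSpace ℝ E]

noncomputable def gaussProfile (L : E →L[ℝ] E) (v : E) : ℝ :=
  Real.exp (-(1 / 2) * ⟪v, L v⟫)

variable {L : E →L[ℝ] E}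

lemma gaussProfile_pos (v : E) : 0 < gaussProfile L v := Real.exp_pos _

lemma hasFDerivAt_inner_self_apply (hL : (L : E →ₗ[ℝ] E).IsSymmetric) (v : E) :
    HasFDerivAt (fun u => ⟪u, L u⟫) ((2 : ℝ) • innerSL ℝ (L v)) v := by
  refine ((hasFDerivAt_id v).inner ℝ L.hasFDerivAt).congr_fderiv ?_
  ext w
  simpa [two_smul, real_inner_comm (L v) w] using (hL v w).symm

lemma hasFDerivAt_gaussProfile (hL : (L : E →ₗ[ℝ] E).IsSymmetric) (v : E) :
    HasFDerivAt (gaussProfile L) (-gaussProfile L v • innerSL ℝ (L v)) v := by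
  refine (((hasFDerivAt_inner_self_apply hL v).const_mul (-(1 / 2) : ℝ)).exp).congr_fderiv ?_
  simp only [smul_smul]
  congr 1
  simp only [gaussProfile]
  ring

lemma differentiable_gaussProfile (hL : (L : E →ₗ[ℝ] E).IsSymmetric) :
    Differentiable ℝ (gaussProfile L) :=
  fun v => (hasFDerivAt_gaussProfile hL v).differentiableAt

lemma gradient_const_mul_gaussProfile_sub [CompleteSpace E] (hL : (L : E →ₗ[ℝ] E).IsSymmetric)
    (c₀ : ℝ) (a x : E) :
    gradient (fun y => c₀ * gaussProfile L (y - a)) x =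
      -c₀ • (gaussProfile L (x - a) • L (x - a)) := by
  have h : HasFDerivAt (fun y => c₀ * gaussProfile L (y - a)) _ x :=
    ((hasFDerivAt_gaussProfile hL (x - a)).comp x ((hasFDerivAt_id x).sub_const a)).const_mul c₀
  rw [h.hasGradientAt.gradient]
  apply (InnerProductSpace.toDual ℝ E).injective
  ext w
  simp [InnerProductSpace.toDual_apply_apply]

variable {c : ℝ≥0}

lemma gaussProfile_le_exp (hcoer : ∀ v, c * ‖v‖ ^ 2 ≤ ⟪v, L v⟫) (v : E) :
    gaussProfile L v ≤ Real.exp (-(c * ‖v‖ ^ 2 / 2)) :=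
  Real.exp_le_exp.2 (by linarith [hcoer v])

lemma gaussProfile_le_one (hcoer : ∀ v, c * ‖v‖ ^ 2 ≤ ⟪v, L v⟫) (v : E) :
    gaussProfile L v ≤ 1 :=
  (gaussProfile_le_exp hcoer v).trans
    (Real.exp_le_one_iff.2 (by simp only [neg_nonpos]; positivity))

lemma sq_norm_mul_gaussProfile_le (hc : 0 < c) (hcoer : ∀ v, c * ‖v‖ ^ 2 ≤ ⟪v, L v⟫) (v : E) :
    ‖v‖ ^ 2 * gaussProfile L v ≤ 2 / c :=
  (mul_le_mul_of_nonneg_left (gaussProfile_le_exp hcoer v) (by positivity)).trans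
    (sq_mul_exp_neg_mul_sq_div_two_le hc ‖v‖)

lemma norm_mul_gaussProfile_le (hc : 0 < c) (hcoer : ∀ v, c * ‖v‖ ^ 2 ≤ ⟪v, L v⟫) (v : E) :
    ‖v‖ * gaussProfile L v ≤ 1 + 2 / c := by
  have hv : ‖v‖ ≤ 1 + ‖v‖ ^ 2 := by nlinarith [sq_nonneg (‖v‖ - 1)]
  calc ‖v‖ * gaussProfile L v ≤ (1 + ‖v‖ ^ 2) * gaussProfile L v :=
        mul_le_mul_of_nonneg_right hv (gaussProfile_pos v).le
    _ = gaussProfile L v + ‖v‖ ^ 2 * gaussProfile L v := by ring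
    _ ≤ 1 + 2 / c :=
        add_le_add (gaussProfile_le_one hcoer v) (sq_norm_mul_gaussProfile_le hc hcoer v)

lemma lipschitzWith_gaussProfile (hL : (L : E →ₗ[ℝ] E).IsSymmetric) (hc : 0 < c)
    (hcoer : ∀ v, c * ‖v‖ ^ 2 ≤ ⟪v, L v⟫) :
    LipschitzWith (‖L‖₊ * (1 + 2 / c)) (gaussProfile L) := by
  refine lipschitzWith_of_nnnorm_fderiv_le (differentiable_gaussProfile hL) fun v => ?_
  rw [← NNReal.coe_le_coe, coe_nnnorm, (hasFDerivAt_gaussProfile hL v).fderiv]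
  push_cast
  calc ‖-gaussProfile L v • innerSL ℝ (L v)‖ = gaussProfile L v * ‖L v‖ := by
        rw [norm_smul, innerSL_apply_norm, norm_neg, Real.norm_of_nonneg (gaussProfile_pos v).le]
    _ ≤ gaussProfile L v * (‖L‖ * ‖v‖) :=
        mul_le_mul_of_nonneg_left (L.le_opNorm v) (gaussProfile_pos v).le
    _ = ‖L‖ * (‖v‖ * gaussProfile L v) := by ring
    _ ≤ ‖L‖ * (1 + 2 / c) :=
        mul_le_mul_of_nonneg_left (norm_mul_gaussProfile_le hc hcoer v) (norm_nonneg L)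

lemma lipschitzWith_gaussProfile_smul (hL : (L : E →ₗ[ℝ] E).IsSymmetric) (hc : 0 < c)
    (hcoer : ∀ v, c * ‖v‖ ^ 2 ≤ ⟪v, L v⟫) :
    LipschitzWith (‖L‖₊ + ‖L‖₊ ^ 2 * (2 / c)) (fun v => gaussProfile L v • L v) := by
  have hderiv (v : E) : HasFDerivAt (fun v => gaussProfile L v • L v)
      (gaussProfile L v • L + (-gaussProfile L v • innerSL ℝ (L v)).smulRight (L v)) v :=
    (hasFDerivAt_gaussProfile hL v).smul L.hasFDerivAt
  refine lipschitzWith_of_nnnorm_fderiv_le (fun v => (hderiv v).differentiableAt) fun v => ?_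
  rw [← NNReal.coe_le_coe, coe_nnnorm, (hderiv v).fderiv]
  push_cast
  have hg0 := (gaussProfile_pos (L := L) v).le
  have hLv : ‖L v‖ ≤ ‖L‖ * ‖v‖ := L.le_opNorm v
  refine (norm_add_le _ _).trans (add_le_add ?_ ?_)
  · rw [norm_smul, Real.norm_of_nonneg hg0]
    exact mul_le_of_le_one_left (norm_nonneg L) (gaussProfile_le_one hcoer v)
  · calc ‖(-gaussProfile L v • innerSL ℝ (L v)).smulRight (L v)‖
          = gaussProfile L v * ‖L v‖ ^ 2 := by
          rw [ContinuousLinearMap.norm_smulRight_apply, norm_smul, innerSL_apply_norm, norm_neg,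
            Real.norm_of_nonneg hg0]
          ring
      _ ≤ gaussProfile L v * (‖L‖ * ‖v‖) ^ 2 := by gcongr
      _ = ‖L‖ ^ 2 * (‖v‖ ^ 2 * gaussProfile L v) := by ring
      _ ≤ ‖L‖ ^ 2 * (2 / c) :=
          mul_le_mul_of_nonneg_left (sq_norm_mul_gaussProfile_le hc hcoer v) (by positivity)

end GaussProfile

section MeanDeviation

variable {Θ X Z : Type*} [NormedAddCommGroup Θ] [NormedAddCommGroup X] [NormedAddCommGroup Z]
  {f : Θ × Z → X}

def meanDeviation (f : Θ × Z → X) (p : Θ × X × Z) : X := p.2.1 - f (p.1, p.2.2)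

lemma differentiable_meanDeviation [NormedSpace ℝ Θ] [NormedSpace ℝ X] [NormedSpace ℝ Z]
    (hf : Differentiable ℝ f) : Differentiable ℝ (meanDeviation f) := by
  unfold meanDeviation
  fun_prop

lemma lipschitzWith_meanDeviation {B : ℝ≥0} (hf : LipschitzWith B f) :
    LipschitzWith (1 + B) (meanDeviation f) := by
  have hx : LipschitzWith 1 fun p : Θ × X × Z => p.2.1 :=
    (LipschitzWith.prod_fst.comp LipschitzWith.prod_snd).weaken (mul_one 1).le
  have hθz : LipschitzWith 1 fun p : Θ × X × Z => (p.1, p.2.2) :=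
    (LipschitzWith.prod_fst.prodMk (LipschitzWith.prod_snd.comp LipschitzWith.prod_snd)).weaken
      (by simp)
  have h := hx.sub (hf.comp hθz)
  rwa [mul_one] at h

end MeanDeviation

section GaussKernel

variable {Θ Z E : Type*} [NormedAddCommGroup Θ] [NormedAddCommGroup Z] [NormedAddCommGroup E]
  [InnerProductSpace ℝ E] {L : E →L[ℝ] E} {c B : ℝ≥0} {f : Θ × Z → E}

lemma gaussProfile_meanDeviation_add_norm_fderiv_le [NormedSpace ℝ Θ] [NormedSpace ℝ Z]
    (hL : (L : E →ₗ[ℝ] E).IsSymmetric) (hc : 0 < c) (hcoer : ∀ v, c * ‖v‖ ^ 2 ≤ ⟪v, L v⟫)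
    (hf : LipschitzWith B f) {c₀ : ℝ} (hc₀ : 0 ≤ c₀) (p : Θ × E × Z) :
    c₀ * gaussProfile L (meanDeviation f p) +
        ‖fderiv ℝ (fun p => c₀ * gaussProfile L (meanDeviation f p)) p‖ ≤
      c₀ * (1 + ‖L‖ * (1 + 2 / c) * (1 + B)) := by
  have hlip : LipschitzWith (‖c₀‖₊ * (‖L‖₊ * (1 + 2 / c) * (1 + B)))
      fun p => c₀ * gaussProfile L (meanDeviation f p) :=
    (lipschitzWith_smul c₀).comp
      ((lipschitzWith_gaussProfile hL hc hcoer).comp (lipschitzWith_meanDeviation hf))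
  have hfderiv := norm_fderiv_le_of_lipschitz ℝ (x₀ := p) hlip
  push_cast at hfderiv
  rw [Real.norm_of_nonneg hc₀] at hfderiv
  have hg := mul_le_of_le_one_right hc₀ (gaussProfile_le_one hcoer (meanDeviation f p))
  linarith

lemma norm_gradient_gaussProfile_sub_le [CompleteSpace E] (hL : (L : E →ₗ[ℝ] E).IsSymmetric)
    (hc : 0 < c) (hcoer : ∀ v, c * ‖v‖ ^ 2 ≤ ⟪v, L v⟫) (hf : LipschitzWith B f) (c₀ : ℝ)
    (θ θ' : Θ) (x x' : E) (z z' : Z) :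
    ‖gradient (fun y => c₀ * gaussProfile L (y - f (θ, z))) x -
        gradient (fun y => c₀ * gaussProfile L (y - f (θ', z'))) x'‖ ≤
      |c₀| * ((‖L‖ + ‖L‖ ^ 2 * (2 / c)) * (1 + B)) *
        ‖((θ, x, z) : Θ × E × Z) - (θ', x', z')‖ := by
  have hlip := (lipschitzWith_smul (-c₀)).comp
    ((lipschitzWith_gaussProfile_smul hL hc hcoer).comp (lipschitzWith_meanDeviation hf))
  rw [gradient_const_mul_gaussProfile_sub hL, gradient_const_mul_gaussProfile_sub hL]
  simpa [meanDeviation] using hlip.norm_sub_le (θ, x, z) (θ', x', z')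

end GaussKernel

theorem gaussian_kernel_regularity_general {dθ dx dz : ℕ} (Bμ : ℝ)
    (μf : Esp dθ → Esp dz → Esp dx)
    (hμ_diff : Differentiable ℝ (fun q : Esp dθ × Esp dz => μf q.1 q.2))
    (hμ_grad_bdd : ∀ (θ : Esp dθ) (z : Esp dz),
      ‖fderiv ℝ (fun q : Esp dθ × Esp dz => μf q.1 q.2) (θ, z)‖ ≤ Bμ)
    (Sig : Matrix (Fin dx) (Fin dx) ℝ) (hSig : Sig.PosDef)
    (k : Esp dθ → Esp dx → Esp dz → ℝ)
    (hk : ∀ (θ : Esp dθ) (x : Esp dx) (z : Esp dz),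
      k θ x z = (2 * Real.pi) ^ (-(dx : ℝ) / 2) * Sig.det ^ (-(1 : ℝ) / 2) *
        Real.exp (-(1 / 2) *
          ((fun i => x i - μf θ z i) ⬝ᵥ (Sig⁻¹ *ᵥ (fun i => x i - μf θ z i))))) :
    (Differentiable ℝ (fun q : Esp dθ × Esp dx × Esp dz => k q.1 q.2.1 q.2.2) ∧
      ∃ B : ℝ, 0 < B ∧ ∀ (θ : Esp dθ) (x : Esp dx) (z : Esp dz),
        k θ x z + ‖fderiv ℝ (fun q : Esp dθ × Esp dx × Esp dz => k q.1 q.2.1 q.2.2)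
          (θ, x, z)‖ ≤ B) ∧
    (∃ K : ℝ, 0 < K ∧ ∀ (θ θ' : Esp dθ) (x x' : Esp dx) (z z' : Esp dz),
      ‖gradient (fun y => k θ y z) x - gradient (fun y => k θ' y z') x'‖ ≤
        K * ‖((θ, x, z) : Esp dθ × Esp dx × Esp dz) - (θ', x', z')‖) := by
  set c₀ : ℝ := (2 * Real.pi) ^ (-(dx : ℝ) / 2) * Sig.det ^ (-(1 : ℝ) / 2)
  have hc₀ : 0 < c₀ := mul_pos (by positivity) (Real.rpow_pos_of_pos hSig.det_pos _)
  set L := toEuclideanCLM (𝕜 := ℝ) Sig⁻¹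
  have hL : (L : Esp dx →ₗ[ℝ] Esp dx).IsSymmetric := isSymmetric_toEuclideanLin_iff.2 hSig.inv.1
  obtain ⟨c, hc, hcoer⟩ := hSig.inv.exists_pos_mul_sq_norm_le_inner_toEuclideanCLM
  set f : Esp dθ × Esp dz → Esp dx := fun q => μf q.1 q.2
  lift Bμ to ℝ≥0 using (norm_nonneg _).trans (hμ_grad_bdd 0 0)
  have hf : LipschitzWith Bμ f :=
    lipschitzWith_of_nnnorm_fderiv_le hμ_diff fun q => hμ_grad_bdd q.1 q.2
  have hk_eq (θ x z) : k θ x z = c₀ * gaussProfile L (x - μf θ z) := by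
    rw [hk, gaussProfile, inner_toEuclideanCLM]
    rfl
  have hk_fun : (fun q : Esp dθ × Esp dx × Esp dz => k q.1 q.2.1 q.2.2) =
      fun p => c₀ * gaussProfile L (meanDeviation f p) := funext fun p => hk_eq _ _ _
  refine ⟨⟨?_, c₀ * (1 + ‖L‖ * (1 + 2 / c) * (1 + Bμ)), by positivity, fun θ x z => ?_⟩,
    |c₀| * ((‖L‖ + ‖L‖ ^ 2 * (2 / c)) * (1 + Bμ)) + 1, by positivity, fun θ θ' x x' z z' => ?_⟩
  · rw [hk_fun]
    exact ((differentiable_gaussProfile hL).comp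
      (differentiable_meanDeviation hμ_diff)).const_mul c₀
  · rw [hk_fun, hk_eq]
    exact gaussProfile_meanDeviation_add_norm_fderiv_le hL hc hcoer hf hc₀.le (θ, x, z)
  · simp_rw [hk_eq]
    exact (norm_gradient_gaussProfile_sub_le hL hc hcoer hf c₀ θ θ' x x' z z').trans
      (by gcongr; linarith)

/-- The Gaussian kernel `k_θ(x|z) = N(x; μ_θ(z), Σ)` with a mean map `μ_θ(z)` that is bounded
Lipschitz with Lipschitz gradient, and fixed symmetric positive definite covariance `Σ`,
satisfies the kernel regularity assumptions: the kernel and its `(θ, x, z)`-gradient are bounded,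
and its `x`-gradient is jointly Lipschitz in `(θ, x, z)`. -/
theorem gaussian_kernel_regularity {dθ dx dz : ℕ} (Bμ Kμ : ℝ) (hBμ : 0 < Bμ) (hKμ : 0 < Kμ)
    (μf : Esp dθ → Esp dz → Esp dx)
    (hμ_diff : Differentiable ℝ (fun q : Esp dθ × Esp dz => μf q.1 q.2))
    (hμ_grad_bdd : ∀ (θ : Esp dθ) (z : Esp dz),
      ‖fderiv ℝ (fun q : Esp dθ × Esp dz => μf q.1 q.2) (θ, z)‖ ≤ Bμ)
    (hμ_lip : ∀ (θ θ' : Esp dθ) (z z' : Esp dz),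
      ‖μf θ z - μf θ' z'‖ ≤ Kμ * ‖((θ, z) : Esp dθ × Esp dz) - (θ', z')‖)
    (hμ_grad_lip : ∀ (θ θ' : Esp dθ) (z z' : Esp dz),
      ‖fderiv ℝ (fun q : Esp dθ × Esp dz => μf q.1 q.2) (θ, z) -
          fderiv ℝ (fun q : Esp dθ × Esp dz => μf q.1 q.2) (θ', z')‖ ≤
        Kμ * ‖((θ, z) : Esp dθ × Esp dz) - (θ', z')‖)
    (Sig : Matrix (Fin dx) (Fin dx) ℝ) (hSig : Sig.PosDef)
    (k : Esp dθ → Esp dx → Esp dz → ℝ)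
    (hk : ∀ (θ : Esp dθ) (x : Esp dx) (z : Esp dz),
      k θ x z = (2 * Real.pi) ^ (-(dx : ℝ) / 2) * Sig.det ^ (-(1 : ℝ) / 2) *
        Real.exp (-(1 / 2) *
          ((fun i => x i - μf θ z i) ⬝ᵥ (Sig⁻¹ *ᵥ (fun i => x i - μf θ z i))))) :
    (Differentiable ℝ (fun q : Esp dθ × Esp dx × Esp dz => k q.1 q.2.1 q.2.2) ∧
      ∃ B : ℝ, 0 < B ∧ ∀ (θ : Esp dθ) (x : Esp dx) (z : Esp dz),
        k θ x z + ‖fderiv ℝ (fun q : Esp dθ × Esp dx × Esp dz => k q.1 q.2.1 q.2.2)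
          (θ, x, z)‖ ≤ B) ∧
    (∃ K : ℝ, 0 < K ∧ ∀ (θ θ' : Esp dθ) (x x' : Esp dx) (z z' : Esp dz),
      ‖gradient (fun y => k θ y z) x - gradient (fun y => k θ' y z') x'‖ ≤
        K * ‖((θ, x, z) : Esp dθ × Esp dx × Esp dz) - (θ', x', z')‖) :=
  gaussian_kernel_regularity_general Bμ μf hμ_diff hμ_grad_bdd Sig hSig k hk
end
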